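/- Let n ≥ 0 be an integer and let (a_k)_{k≥1} be a finitely supported sequence of non-negative integers satisfying ∑_{k≥1}(2−k)·a_k = 2 + 6n. Let m be the largest index k with a_k ≠ 0 and suppose m ≥ 4. Define (b_k) by b_m = a_m − 1, b_{m−2} = a_{m−2} + 1, b_1 = a_1 − 2, and b_k = a_k for all other k. Then all b_k are non-negative integers, ∑_{k≥1}(2−k)·b_k = 2 + 6n, and ∑_{k≥1} b_k ≡ ∑_{k≥1} a_k (mod 2). -/
import Mathlib


/-- First reduction move of the paper, case `m ≥ 4`.  If `(a_k)_{k≥1}` is a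
finitely supported sequence of non-negative integers satisfying (E):
`∑_{k≥1}(2-k)·a_k = 2 + 6n`, and `m ≥ 4` is the largest index with `a m ≠ 0`, then the
sequence `b` obtained by subtracting 1 from `a m`, adding 1 to `a (m-2)` and subtracting 2
from `a 1` consists of non-negative integers, satisfies (E) with the same `n`, and has the
same parity of the total sum. -/
theorem stmt1 (n : ℕ) (a : ℕ → ℕ) (hfin : (Function.support a).Finite)
    (h0 : a 0 = 0)
    (hE : ∑' k : ℕ, (2 - (k : ℤ)) * (a k : ℤ) = 2 + 6 * n)
    (m : ℕ) (hm : a m ≠ 0) (hmax : ∀ k, a k ≠ 0 → k ≤ m) (hm4 : 4 ≤ m)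
    (b : ℕ → ℤ)
    (hb : ∀ k, b k =
      if k = m then (a m : ℤ) - 1
      else if k = m - 2 then (a (m - 2) : ℤ) + 1
      else if k = 1 then (a 1 : ℤ) - 2
      else (a k : ℤ)) :
    (∀ k, 0 ≤ b k) ∧
    (∑' k : ℕ, (2 - (k : ℤ)) * b k = 2 + 6 * n) ∧
    (∑' k : ℕ, b k) ≡ (∑' k : ℕ, (a k : ℤ)) [ZMOD 2] := by
  classical
  set s : Finset ℕ := hfin.toFinset ∪ {m, m - 2, 1} with hs
  have hms : m ∈ s := by simp [hs]
  have hm2s : m - 2 ∈ s := by simp [hs]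
  have h1s : (1 : ℕ) ∈ s := by simp [hs]
  have ha0 : ∀ k ∉ s, a k = 0 := by
    intro k hk
    have : k ∉ hfin.toFinset := fun h => hk (Finset.mem_union_left _ h)
    simpa [Function.mem_support] using (fun h => this (by simpa using h) : ¬ a k ≠ 0)
  have hbk0 : ∀ k ∉ s, (2 - (k : ℤ)) * b k = 0 := by
    intro k hk
    have h1 : k ≠ m := fun h => hk (h ▸ hms)
    have h2 : k ≠ m - 2 := fun h => hk (h ▸ hm2s)
    have h3 : k ≠ 1 := fun h => hk (h ▸ h1s)
    rw [hb, if_neg h1, if_neg h2, if_neg h3, ha0 k hk]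
    simp
  have hak0 : ∀ k ∉ s, (2 - (k : ℤ)) * (a k : ℤ) = 0 := by
    intro k hk; rw [ha0 k hk]; simp
  have hsumA : ∑' k : ℕ, (2 - (k : ℤ)) * (a k : ℤ) = ∑ k ∈ s, (2 - (k : ℤ)) * (a k : ℤ) :=
    tsum_eq_sum hak0
  have hEA : ∑ k ∈ s, (2 - (k : ℤ)) * (a k : ℤ) = 2 + 6 * n := by rw [← hsumA]; exact hE
  -- a 1 ≥ 2
  have ha1 : 2 ≤ (a 1 : ℤ) := by
    have hsplit : ∑ k ∈ s, (2 - (k : ℤ)) * (a k : ℤ)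
        = (2 - (1 : ℤ)) * (a 1 : ℤ) + ∑ k ∈ s.erase 1, (2 - (k : ℤ)) * (a k : ℤ) := by
      rw [← Finset.add_sum_erase _ _ h1s]; norm_num
    have hrest : ∑ k ∈ s.erase 1, (2 - (k : ℤ)) * (a k : ℤ) ≤ 0 := by
      apply Finset.sum_nonpos
      intro k hk
      have hk1 : k ≠ 1 := (Finset.mem_erase.mp hk).1
      rcases Nat.lt_or_ge k 2 with h | h
      · have : k = 0 := by omega
        simp [this, h0]
      · have h2k : (2 : ℤ) - (k : ℤ) ≤ 0 := by
          have : (2 : ℤ) ≤ (k : ℤ) := by exact_mod_cast h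
          linarith
        exact mul_nonpos_of_nonpos_of_nonneg h2k (by positivity)
    have h6 : (0 : ℤ) ≤ 6 * n := by positivity
    rw [hEA] at hsplit
    nlinarith
  have ham : 1 ≤ (a m : ℤ) := by
    have : 1 ≤ a m := Nat.one_le_iff_ne_zero.mpr hm
    exact_mod_cast this
  -- pointwise decomposition for the weighted sum
  have hmcast : ((m - 2 : ℕ) : ℤ) = (m : ℤ) - 2 := by
    have : (2 : ℕ) ≤ m := by omega
    push_cast [this]; ring
  have hpt : ∀ k : ℕ, (2 - (k : ℤ)) * b k = (2 - (k : ℤ)) * (a k : ℤ) +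
      ((if k = m then (m : ℤ) - 2 else 0) + (if k = m - 2 then 4 - (m : ℤ) else 0) +
        (if k = 1 then -2 else 0)) := by
    intro k
    rw [hb]
    by_cases h1 : k = m
    · rw [if_pos h1, if_pos h1, if_neg (show ¬ k = m - 2 by omega),
        if_neg (show ¬ k = 1 by omega), h1]
      ring
    · by_cases h2 : k = m - 2
      · rw [if_neg h1, if_pos h2, if_neg h1, if_pos h2,
          if_neg (show ¬ k = 1 by omega), h2, hmcast]
        ring
      · by_cases h3 : k = 1
        · rw [if_neg h1, if_neg h2, if_pos h3, if_neg h1, if_neg h2, if_pos h3, h3]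
          push_cast; ring
        · rw [if_neg h1, if_neg h2, if_neg h3, if_neg h1, if_neg h2, if_neg h3]
          ring
  have hpt2 : ∀ k, b k = (a k : ℤ) +
      ((if k = m then (-1 : ℤ) else 0) + (if k = m - 2 then 1 else 0) +
        (if k = 1 then -2 else 0)) := by
    intro k
    rw [hb]
    by_cases h1 : k = m
    · rw [if_pos h1, if_pos h1, if_neg (show ¬ k = m - 2 by omega),
        if_neg (show ¬ k = 1 by omega), h1]
      ring
    · by_cases h2 : k = m - 2
      · rw [if_neg h1, if_pos h2, if_neg h1, if_pos h2,
          if_neg (show ¬ k = 1 by omega), h2]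
        ring
      · by_cases h3 : k = 1
        · rw [if_neg h1, if_neg h2, if_pos h3, if_neg h1, if_neg h2, if_pos h3, h3]
          ring
        · rw [if_neg h1, if_neg h2, if_neg h3, if_neg h1, if_neg h2, if_neg h3]
          ring
  refine ⟨?_, ?_, ?_⟩
  · intro k
    rw [hb]
    by_cases h1 : k = m
    · rw [if_pos h1]; linarith
    · rw [if_neg h1]
      by_cases h2 : k = m - 2
      · rw [if_pos h2]; positivity
      · rw [if_neg h2]
        by_cases h3 : k = 1
        · rw [if_pos h3]; linarith
        · rw [if_neg h3]; positivity
  · rw [tsum_eq_sum hbk0]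
    rw [Finset.sum_congr rfl (fun k _ => hpt k)]
    rw [Finset.sum_add_distrib, Finset.sum_add_distrib, Finset.sum_add_distrib,
      Finset.sum_ite_eq' s m (fun _ => (m : ℤ) - 2),
      Finset.sum_ite_eq' s (m - 2) (fun _ => 4 - (m : ℤ)),
      Finset.sum_ite_eq' s 1 (fun _ => (-2 : ℤ)),
      if_pos hms, if_pos hm2s, if_pos h1s, hEA]
    ring
  · have hb0 : ∀ k ∉ s, b k = 0 := by
      intro k hk
      have h1 : k ≠ m := fun h => hk (h ▸ hms)
      have h2 : k ≠ m - 2 := fun h => hk (h ▸ hm2s)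
      have h3 : k ≠ 1 := fun h => hk (h ▸ h1s)
      rw [hpt2 k, ha0 k hk, if_neg h1, if_neg h2, if_neg h3]
      simp
    have ha0' : ∀ k ∉ s, ((a k : ℤ)) = 0 := fun k hk => by rw [ha0 k hk]; simp
    rw [tsum_eq_sum hb0, tsum_eq_sum ha0']
    rw [Finset.sum_congr rfl (fun k _ => hpt2 k)]
    rw [Finset.sum_add_distrib, Finset.sum_add_distrib, Finset.sum_add_distrib,
      Finset.sum_ite_eq' s m (fun _ => (-1 : ℤ)),
      Finset.sum_ite_eq' s (m - 2) (fun _ => (1 : ℤ)),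
      Finset.sum_ite_eq' s 1 (fun _ => (-2 : ℤ)),
      if_pos hms, if_pos hm2s, if_pos h1s]
    exact Int.ModEq.symm (Int.modEq_iff_dvd.mpr ⟨-1, by ring⟩)
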